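/- arXiv:2104.09763 — 3 statements merged into one kernel-verified Lean document; each statement's English description precedes it below -/
import Mathlib

section
/- For b ∈ ℝ and x, y > b, the difference of free and half-line Dirichlet Green's functions equals [G_free - G_{(b,∞)}](x,y;k²) = -e^{ik(x+y-2b)}/(2ik) for Im k > 0, and computing (i/π)∫ along the positive imaginary axis, the kernel of H_free - H_{(b,∞)} at (x,y) equals -1/(π(x+y-2b)²); in particular its diagonal value at x is -1/(4π(x-b)²). -/
open MeasureTheory Set Real

/-- `G_free(x, y; k²)`, the resolvent kernel of `-Δ` on `ℝ`. -/
noncomputable def greenFree (k : ℂ) (x y : ℝ) : ℂ :=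
  -Complex.exp (Complex.I * k * |x - y|) / (2 * Complex.I * k)

/-- `G_{(b,∞)}(x, y; k²)`: the image source at `2b - y` enforces the Dirichlet condition at `b`. -/
noncomputable def greenHalfLine (b : ℝ) (k : ℂ) (x y : ℝ) : ℂ :=
  -(Complex.exp (Complex.I * k * |x - y|) - Complex.exp (Complex.I * k * |x + y - 2 * b|)) /
    (2 * Complex.I * k)

theorem greenFree_sub_greenHalfLine {b x y : ℝ} (hxy : 2 * b ≤ x + y) (k : ℂ) :
    greenFree k x y - greenHalfLine b k x y =
      -Complex.exp (Complex.I * k * (x + y - 2 * b)) / (2 * Complex.I * k) := by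
  rw [greenFree, greenHalfLine, abs_of_nonneg (sub_nonneg.2 hxy)]
  push_cast
  ring

theorem integral_Ioi_mul_exp_neg_mul {r : ℝ} (hr : 0 < r) :
    ∫ t in Ioi (0 : ℝ), t * exp (-(r * t)) = 1 / r ^ 2 := by
  simpa only [show (2 : ℝ) - 1 = 1 by norm_num, Gamma_two, rpow_one, rpow_two, mul_one, div_pow,
    one_pow] using integral_rpow_mul_exp_neg_mul_Ioi two_pos hr

theorem integral_Ioi_sq_mul_exp_neg_mul_div {a : ℝ} (ha : 0 < a) :
    ∫ k in Ioi (0 : ℝ), k ^ 2 * (exp (-k * a) / (2 * k)) = 1 / (2 * a ^ 2) := by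
  have hintegrand : EqOn (fun k : ℝ ↦ k ^ 2 * (exp (-k * a) / (2 * k)))
      (fun k ↦ 2⁻¹ * (k * exp (-(a * k)))) (Ioi 0) := fun k (hk : 0 < k) ↦ by
    simp only [neg_mul, mul_comm k a]
    field_simp
  rw [setIntegral_congr_fun measurableSet_Ioi hintegrand, integral_const_mul,
    integral_Ioi_mul_exp_neg_mul ha]
  ring

/-- For `x, y > b`: (i) the difference of the free and half-line Dirichlet Green's
functions is `[G_free - G_{(b,∞)}](x,y;k²) = -e^{ik(x+y-2b)}/(2ik)` for `Im k > 0`;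
(ii) integrating along the positive imaginary axis, the kernel of
`H_free - H_{(b,∞)}` at `(x,y)` equals `-1/(π(x+y-2b)²)`, computed as
`-(2/π)∫₀^∞ k² [G_free - G_{(b,∞)}](x,y;(ik)²) dk` where the integrand at `(ik)²`
is `e^{-k(x+y-2b)}/(2k)`; (iii) on the diagonal `y = x` this is `-1/(4π(x-b)²)`. -/
theorem halfline_sqrt_laplacian_kernel_difference
    (b x y : ℝ) (hx : b < x) (hy : b < y) :
    (∀ k : ℂ, 0 < k.im →
      (-Complex.exp (Complex.I * k * |x - y|) / (2 * Complex.I * k))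
        - (-(Complex.exp (Complex.I * k * |x - y|)
              - Complex.exp (Complex.I * k * |x + y - 2 * b|)) / (2 * Complex.I * k))
      = -Complex.exp (Complex.I * k * (x + y - 2 * b)) / (2 * Complex.I * k))
    ∧
    (-(2 / Real.pi) * ∫ k in Set.Ioi (0 : ℝ),
        k ^ 2 * (Real.exp (-k * (x + y - 2 * b)) / (2 * k))
      = -1 / (Real.pi * (x + y - 2 * b) ^ 2))
    ∧
    (-1 / (Real.pi * (x + x - 2 * b) ^ 2) = -1 / (4 * Real.pi * (x - b) ^ 2)) := by
  have hpos : 0 < x + y - 2 * b := by linarith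
  refine ⟨fun k _ ↦ greenFree_sub_greenHalfLine (by linarith) k, ?_, ?_⟩
  · rw [integral_Ioi_sq_mul_exp_neg_mul_div hpos]
    field_simp
  · ring
end

section
/- For a < b, the compact evaluation ∫₀^∞ k·cosh(ak)/sinh(bk) dk = (π²/(4b²))·sec²(aπ/(2b)) holds whenever |a| < b, b > 0. -/
/-!
Expanding `1 / sinh (b k)` as a geometric series in `exp (-2 b k)` gives
`k cosh (a k) / sinh (b k) = ∑ₙ k (exp (-((2n+1)b - a) k) + exp (-((2n+1)b + a) k))`, a series
of nonnegative terms, so it may be integrated termwise: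
`∫₀^∞ k exp (-c k) dk = 1 / c²` turns the integral into
`∑ₙ 1 / ((2n+1)b - a)² + 1 / ((2n+1)b + a)²`. Folded into a sum over `ℤ` this is
`(4b²)⁻¹ ∑ₙ 1 / (y - n)²` with `y = (a - b) / (2b)`, and Parseval's identity for
`t ↦ exp (2πiyt)` on `(0, 1]` evaluates it as `π² / sin² (πy)`,
where `sin (πy) = -cos (aπ / (2b))`.
-/

open MeasureTheory

lemma integral_eq_of_hasSum_of_nonneg {α ι : Type*} [MeasurableSpace α] [Countable ι]
    {μ : Measure α} {f : ι → α → ℝ} {g : α → ℝ} {S : ℝ} (hf : ∀ i, Integrable (f i) μ)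
    (hf_nonneg : ∀ i, 0 ≤ᵐ[μ] f i) (hfg : ∀ᵐ x ∂μ, HasSum (fun i => f i x) (g x))
    (hS : HasSum (fun i => ∫ x, f i x ∂μ) S) : ∫ x, g x ∂μ = S := by
  have hnorm (i : ι) : ∫ x, ‖f i x‖ ∂μ = ∫ x, f i x ∂μ :=
    integral_congr_ae <| (hf_nonneg i).mono fun x hx => Real.norm_of_nonneg hx
  rw [← hS.tsum_eq,
    integral_tsum_of_summable_integral_norm hf (by simpa only [hnorm] using hS.summable)]
  exact integral_congr_ae <| hfg.mono fun x hx => hx.tsum_eq.symm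

section Real

open Real Set

lemma integral_mul_exp_neg_mul_Ioi {c : ℝ} (hc : 0 < c) :
    ∫ t in Ioi (0 : ℝ), t * exp (-(c * t)) = 1 / c ^ 2 := by
  simpa [Gamma_two, show (2 : ℝ) - 1 = 1 by norm_num] using
    integral_rpow_mul_exp_neg_mul_Ioi two_pos hc

lemma integrableOn_mul_exp_neg_mul_Ioi {c : ℝ} (hc : 0 < c) :
    IntegrableOn (fun t => t * exp (-(c * t))) (Ioi 0) :=
  .of_integral_ne_zero (by rw [integral_mul_exp_neg_mul_Ioi hc]; positivity)

lemma hasSum_exp_neg_odd_mul {t : ℝ} (ht : 0 < t) :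
    HasSum (fun n : ℕ => exp (-((2 * n + 1) * t))) (1 / (2 * sinh t)) := by
  have hq : exp (-(2 * t)) < 1 := exp_lt_one_iff.mpr (by linarith)
  have hterm (n : ℕ) : exp (-t) * exp (-(2 * t)) ^ n = exp (-((2 * n + 1) * t)) := by
    rw [← exp_nat_mul, ← exp_add]; ring_nf
  have hsum : exp (-t) * (1 - exp (-(2 * t)))⁻¹ = 1 / (2 * sinh t) := by
    have h2sinh : 2 * sinh t = exp t * (1 - exp (-(2 * t))) := by
      rw [sinh_eq, mul_sub, ← exp_add]; ring_nf
    have : 1 - exp (-(2 * t)) ≠ 0 := by linarith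
    rw [h2sinh, exp_neg t]
    field_simp
  simpa only [hterm, hsum] using
    (hasSum_geometric_of_lt_one (exp_nonneg _) hq).mul_left (exp (-t))

lemma hasSum_cosh_div_sinh (s : ℝ) {t : ℝ} (ht : 0 < t) :
    HasSum (fun n : ℕ => exp (-((2 * n + 1) * t - s)) + exp (-((2 * n + 1) * t + s)))
      (cosh s / sinh t) := by
  have hterm (n : ℕ) : 2 * cosh s * exp (-((2 * n + 1) * t)) =
      exp (-((2 * n + 1) * t - s)) + exp (-((2 * n + 1) * t + s)) := by
    rw [cosh_eq, sub_eq_add_neg, neg_add, neg_neg, neg_add, exp_add, exp_add]; ring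
  have hsum : 2 * cosh s * (1 / (2 * sinh t)) = cosh s / sinh t := by
    field_simp
  simpa only [hterm, hsum] using (hasSum_exp_neg_odd_mul ht).mul_left (2 * cosh s)

lemma hasSum_mul_cosh_mul_div_sinh_mul (a : ℝ) {b k : ℝ} (hb : 0 < b) (hk : 0 < k) :
    HasSum (fun n : ℕ => k * exp (-(((2 * n + 1) * b - a) * k)) +
      k * exp (-(((2 * n + 1) * b + a) * k))) (k * cosh (a * k) / sinh (b * k)) := by
  have hterm (n : ℕ) : k * (exp (-((2 * n + 1) * (b * k) - a * k)) +
      exp (-((2 * n + 1) * (b * k) + a * k))) =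
      k * exp (-(((2 * n + 1) * b - a) * k)) + k * exp (-(((2 * n + 1) * b + a) * k)) := by
    ring_nf
  simpa only [hterm, mul_div_assoc] using
    (hasSum_cosh_div_sinh (a * k) (mul_pos hb hk)).mul_left k

end Real

section Fourier

open Real Set Complex

lemma fourierCoeffOn_exp_mul_I {y : ℝ} {n : ℤ} (hy : y ≠ n) :
    fourierCoeffOn zero_lt_one (fun t : ℝ => cexp (2 * π * I * y * t)) n =
      (cexp (2 * π * I * y) - 1) / (2 * π * I * (y - n)) := by
  have hc : 2 * π * I * (y - n) ≠ 0 := by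
    have : (y : ℂ) - n ≠ 0 := by exact_mod_cast sub_ne_zero.mpr hy
    simp [pi_ne_zero, this]
  have hint (t : ℝ) : fourier (-n) (t : AddCircle (1 - 0 : ℝ)) • cexp (2 * π * I * y * t) =
      cexp (2 * π * I * (y - n) * t) := by
    rw [fourier_coe_apply, smul_eq_mul, ← Complex.exp_add]
    congr 1
    push_cast
    ring
  have hperiod : cexp (2 * π * I * (y - n)) = cexp (2 * π * I * y) := by
    rw [mul_sub, Complex.exp_sub, show 2 * π * I * n = n * (2 * π * I) by ring,
      Complex.exp_int_mul_two_pi_mul_I, div_one]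
  rw [fourierCoeffOn_eq_integral]
  simp_rw [hint]
  simp [integral_exp_mul_complex hc, hperiod]

lemma norm_fourierCoeffOn_exp_mul_I_sq {y : ℝ} {n : ℤ} (hy : y ≠ n) :
    ‖fourierCoeffOn zero_lt_one (fun t : ℝ => cexp (2 * π * I * y * t)) n‖ ^ 2 =
      Real.sin (π * y) ^ 2 / π ^ 2 * (1 / (y - n) ^ 2) := by
  have hnum : ‖cexp (2 * π * I * y) - 1‖ = ‖2 * Real.sin (π * y)‖ := by
    rw [show 2 * π * I * y = I * (2 * π * y : ℝ) by push_cast; ring,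
      norm_exp_I_mul_ofReal_sub_one]
    ring_nf
  have hden : ‖2 * π * I * (y - n)‖ = 2 * π * |y - n| := by
    rw [show 2 * π * I * (y - n) = ((2 * π * (y - n) : ℝ) : ℂ) * I by push_cast; ring,
      norm_mul, Complex.norm_I, mul_one, Complex.norm_real, Real.norm_eq_abs, abs_mul,
      abs_of_pos two_pi_pos]
  rw [fourierCoeffOn_exp_mul_I hy, norm_div, hnum, hden, Real.norm_eq_abs, div_pow, mul_pow,
    sq_abs, sq_abs]
  field_simp

lemma hasSum_one_div_sub_int_sq {y : ℝ} (hy : Real.sin (π * y) ≠ 0) :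
    HasSum (fun n : ℤ => 1 / (y - n) ^ 2) (π ^ 2 / Real.sin (π * y) ^ 2) := by
  have hyn (n : ℤ) : y ≠ n := by
    rintro rfl
    exact hy (by rw [mul_comm]; exact Real.sin_int_mul_pi n)
  have hnorm (t : ℝ) : ‖cexp (2 * π * I * y * t)‖ = 1 := by
    rw [show 2 * π * I * y * t = ((2 * π * y * t : ℝ) : ℂ) * I by push_cast; ring]
    exact Complex.norm_exp_ofReal_mul_I _
  have hL2 : MemLp (fun t : ℝ => cexp (2 * π * I * y * t)) 2 (volume.restrict (Ioc 0 1)) :=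
    .of_bound (by fun_prop) 1 (.of_forall fun t => (hnorm t).le)
  have hparseval := hasSum_sq_fourierCoeffOn zero_lt_one hL2
  have hL2norm : (1 - 0 : ℝ)⁻¹ • ∫ _ in (0 : ℝ)..1, (1 : ℝ) ^ 2 = 1 := by norm_num
  simp only [norm_fourierCoeffOn_exp_mul_I_sq (hyn _), hnorm, hL2norm] at hparseval
  have hK : Real.sin (π * y) ^ 2 / π ^ 2 ≠ 0 := by positivity
  have hcancel : Real.sin (π * y) ^ 2 / π ^ 2 * (π ^ 2 / Real.sin (π * y) ^ 2) = 1 := by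
    field_simp
  rwa [← hasSum_mul_left_iff hK, hcancel]
lemma hasSum_one_div_odd_mul_sub_sq_add_one_div_odd_mul_add_sq {a b : ℝ} (hb : b ≠ 0)
    (hcos : Real.cos (a * π / (2 * b)) ≠ 0) :
    HasSum (fun n : ℕ => 1 / ((2 * n + 1) * b - a) ^ 2 + 1 / ((2 * n + 1) * b + a) ^ 2)
      (π ^ 2 / (4 * b ^ 2) * (1 / Real.cos (a * π / (2 * b))) ^ 2) := by
  set y := (a - b) / (2 * b) with hy
  have hsin : Real.sin (π * y) = -Real.cos (a * π / (2 * b)) := by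
    rw [show π * y = a * π / (2 * b) - π / 2 by rw [hy]; field_simp, Real.sin_sub_pi_div_two]
  have h := (hasSum_one_div_sub_int_sq (hsin ▸ neg_ne_zero.mpr hcos)).nat_add_neg_add_one
  have hterm (n : ℕ) : 1 / (y - (n : ℤ)) ^ 2 + 1 / (y - (-(n + 1) : ℤ)) ^ 2 =
      4 * b ^ 2 * (1 / ((2 * n + 1) * b - a) ^ 2 + 1 / ((2 * n + 1) * b + a) ^ 2) := by
    have h1 : y - (n : ℤ) = -((2 * n + 1) * b - a) / (2 * b) := by
      rw [hy]; push_cast; field_simp; ring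
    have h2 : y - (-(n + 1) : ℤ) = ((2 * n + 1) * b + a) / (2 * b) := by
      rw [hy]; push_cast; field_simp; ring
    rw [h1, h2, neg_div, neg_sq, div_pow, div_pow, one_div_div, one_div_div]
    ring
  simp only [hterm, hsin, neg_sq] at h
  rwa [← hasSum_mul_left_iff (by positivity : 4 * b ^ 2 ≠ 0), ← mul_assoc,
    mul_div_cancel₀ _ (by positivity : 4 * b ^ 2 ≠ 0), one_div, inv_pow, ← div_eq_mul_inv]


end Fourier

/-- `∫₀^∞ k·cosh(ak)/sinh(bk) dk = (π²/(4b²))·sec²(aπ/(2b))` for `|a| < b`, `b > 0`. -/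
theorem integral_mul_cosh_div_sinh (a b : ℝ) (hb : 0 < b) (hab : |a| < b) :
    ∫ k in Set.Ioi (0 : ℝ), k * Real.cosh (a * k) / Real.sinh (b * k)
      = (Real.pi ^ 2 / (4 * b ^ 2)) * (1 / Real.cos (a * Real.pi / (2 * b))) ^ 2 := by
  obtain ⟨hab₁, hab₂⟩ := abs_lt.mp hab
  have hminus (n : ℕ) : 0 < (2 * n + 1) * b - a := by nlinarith [n.cast_nonneg (α := ℝ)]
  have hplus (n : ℕ) : 0 < (2 * n + 1) * b + a := by nlinarith [n.cast_nonneg (α := ℝ)]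
  have hcos : 0 < Real.cos (a * Real.pi / (2 * b)) := by
    apply Real.cos_pos_of_mem_Ioo
    constructor
    · rw [lt_div_iff₀ (by positivity)]; nlinarith [Real.pi_pos]
    · rw [div_lt_iff₀ (by positivity)]; nlinarith [Real.pi_pos]
  refine integral_eq_of_hasSum_of_nonneg
    (f := fun (n : ℕ) k => k * Real.exp (-(((2 * n + 1) * b - a) * k)) +
      k * Real.exp (-(((2 * n + 1) * b + a) * k))) (fun n => ?_) (fun n => ?_) ?_ ?_
  · exact (integrableOn_mul_exp_neg_mul_Ioi (hminus n)).add
      (integrableOn_mul_exp_neg_mul_Ioi (hplus n))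
  · filter_upwards [ae_restrict_mem measurableSet_Ioi] with k (hk : 0 < k)
    positivity
  · filter_upwards [ae_restrict_mem measurableSet_Ioi] with k hk
    exact hasSum_mul_cosh_mul_div_sinh_mul a hb hk
  · simp only [integral_add (integrableOn_mul_exp_neg_mul_Ioi (hminus _))
      (integrableOn_mul_exp_neg_mul_Ioi (hplus _)), integral_mul_exp_neg_mul_Ioi (hminus _),
      integral_mul_exp_neg_mul_Ioi (hplus _)]
    exact hasSum_one_div_odd_mul_sub_sq_add_one_div_odd_mul_add_sq hb.ne' hcos.ne'
end

section
/- Let f : (0,∞) → ℝ be continuous with f(t) = O(e^{-ct}) as t → ∞ for some c > 0, and admitting an asymptotic expansion f(t) ~ t^{-(d-1)/2} Σ_{k≥0} a_k t^k as t → 0⁺ (in the sense that for every N, f(t) - t^{-(d-1)/2}Σ_{k<N} a_k t^k = O(t^{N-(d-1)/2})). Then the Mellin transform ζ(s) = (1/Γ(s))∫₀^∞ t^{s-1} f(t) dt, absolutely convergent for Re(s) > (d-1)/2, extends to a meromorphic function on ℂ whose only possible poles are simple poles at s = (d-1)/2 - k, k ∈ ℕ₀, with residue a_k/Γ((d-1)/2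 - k) (in particular no pole when (d-1)/2 - k is a non-positive integer). -/
open MeasureTheory Set Filter Asymptotics Topology
open Complex (Gamma)

/-!
Subtract from `f` the first `N` terms `a_k t^(k-α)` of its expansion, cut off at `t = 1`. The
remainder is `O(t^(N-α))` at `0` and still decays exponentially, so its Mellin transform is
holomorphic on `re s > α - N`, while each cut-off term has Mellin transform `1 / (s - (α - k))`.
Hence for `re s > α`, `Γ(s)⁻¹ ∫ t^(s-1) f` equals `Γ(s)⁻¹` times the remainder's transform plus
`∑_{k<N} a_k Γ(s)⁻¹ / (s - (α - k))`, and this expression is meromorphic on `re s > α - N`;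
the expressions for different `N` agree where both are defined. As `Γ⁻¹` is entire,
`Γ(s)⁻¹ / (s - p)` is an entire function (a `dslope`) plus `Γ(p)⁻¹ / (s - p)`, which gives the
residues.
-/

theorem MeasureTheory.LocallyIntegrableOn.indicator {X E : Type*} [MeasurableSpace X]
    [TopologicalSpace X] [NormedAddCommGroup E] {μ : Measure X} {f : X → E} {s t : Set X}
    (hf : LocallyIntegrableOn f s μ) (ht : MeasurableSet t) :
    LocallyIntegrableOn (t.indicator f) s μ := fun x hx =>
  let ⟨U, hU, hfU⟩ := hf x hx
  ⟨U, hU, hfU.indicator ht⟩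

theorem div_sub_eq_dslope_add_div {𝕜 : Type*} [NontriviallyNormedField 𝕜] (g : 𝕜 → 𝕜)
    {p s : 𝕜} (hs : s ≠ p) : g s / (s - p) = dslope g p s + g p / (s - p) := by
  rw [dslope_of_ne _ hs, slope_def_field]
  ring

noncomputable def expansionRemainder (α : ℝ) (f : ℝ → ℂ) (a : ℕ → ℂ) (N : ℕ) (t : ℝ) : ℂ :=
  f t - ∑ k ∈ Finset.range N, a k * (Ioc 0 1).indicator (fun t : ℝ => (t : ℂ) ^ ((k : ℂ) - α)) t

structure HasMellinExpansion (α : ℝ) (f : ℝ → ℂ) (a : ℕ → ℂ) : Prop where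
  locallyIntegrableOn : LocallyIntegrableOn f (Ioi 0)
  exists_isBigO_exp : ∃ c > 0, f =O[atTop] fun t => Real.exp (-c * t)
  remainder_isBigO : ∀ N : ℕ,
    expansionRemainder α f a N =O[𝓝[>] 0] fun t => t ^ ((N : ℝ) - α)

noncomputable def principalPart (α : ℝ) (a : ℕ → ℂ) (N : ℕ) (s : ℂ) : ℂ :=
  ∑ k ∈ Finset.range N, a k * (Gamma (α - k))⁻¹ / (s - (α - k))

noncomputable def regularPart (α : ℝ) (f : ℝ → ℂ) (a : ℕ → ℂ) (N : ℕ) (s : ℂ) : ℂ :=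
  (Gamma s)⁻¹ * mellin (expansionRemainder α f a N) s
    + ∑ k ∈ Finset.range N, a k * dslope (fun z => (Gamma z)⁻¹) (α - k) s

/-- The ceiling only picks some `N` with `α - N < re s`; by `regularPart_add_principalPart_of_le`
the value does not depend on that choice. -/
noncomputable def mellinContinuation (α : ℝ) (f : ℝ → ℂ) (a : ℕ → ℂ) (s : ℂ) : ℂ :=
  regularPart α f a (⌈α - s.re⌉₊ + 1) s + principalPart α a (⌈α - s.re⌉₊ + 1) s

section

variable {α : ℝ} {f : ℝ → ℂ} {a : ℕ → ℂ}

@[simp]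
theorem expansionRemainder_zero : expansionRemainder α f a 0 = f := by
  ext t
  simp [expansionRemainder]

theorem expansionRemainder_succ (N : ℕ) :
    expansionRemainder α f a (N + 1) = fun t => expansionRemainder α f a N t
      - a N * (Ioc 0 1).indicator (fun t : ℝ => (t : ℂ) ^ ((N : ℂ) - α)) t := by
  ext t
  simp only [expansionRemainder, Finset.sum_range_succ]
  ring

theorem expansionRemainder_of_one_lt (N : ℕ) {t : ℝ} (ht : 1 < t) :
    expansionRemainder α f a N t = f t := by
  simp [expansionRemainder, indicator_of_notMem (fun h : t ∈ Ioc 0 1 => ht.not_ge h.2)]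

theorem locallyIntegrableOn_expansionRemainder (hf : LocallyIntegrableOn f (Ioi 0)) (N : ℕ) :
    LocallyIntegrableOn (expansionRemainder α f a N) (Ioi 0) := by
  induction N with
  | zero => simpa using hf
  | succ N ih =>
    rw [expansionRemainder_succ]
    refine ih.sub (.smul (.indicator (ContinuousOn.locallyIntegrableOn (fun t ht => ?_)
      measurableSet_Ioi) measurableSet_Ioc) (a N))
    exact (Complex.continuousAt_ofReal_cpow_const t _ (.inr (ne_of_gt ht))).continuousWithinAt

theorem analyticAt_principalPart {N : ℕ} {s : ℂ} (hs : ∀ k < N, s ≠ α - k) :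
    AnalyticAt ℂ (principalPart α a N) s :=
  Finset.analyticAt_fun_sum _ fun k hk => analyticAt_const.div (analyticAt_id.sub analyticAt_const)
    (sub_ne_zero.2 (hs k (Finset.mem_range.1 hk)))

namespace HasMellinExpansion

variable (h : HasMellinExpansion α f a) {N : ℕ} {s : ℂ}
include h

theorem exists_remainder_isBigO_exp (N : ℕ) :
    ∃ c > 0, expansionRemainder α f a N =O[atTop] fun t => Real.exp (-c * t) := by
  obtain ⟨c, hc, hdecay⟩ := h.exists_isBigO_exp
  refine ⟨c, hc, (EventuallyEq.isBigO ?_).trans hdecay⟩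
  filter_upwards [eventually_gt_atTop 1] with t ht using expansionRemainder_of_one_lt N ht

theorem mellinConvergent_remainder (hs : α - N < s.re) :
    MellinConvergent (expansionRemainder α f a N) s :=
  let ⟨_, hc, hdecay⟩ := h.exists_remainder_isBigO_exp N
  mellinConvergent_of_isBigO_rpow_exp hc (locallyIntegrableOn_expansionRemainder
    h.locallyIntegrableOn N) hdecay (by simpa using h.remainder_isBigO N) hs

theorem differentiableAt_mellin_remainder (hs : α - N < s.re) :
    DifferentiableAt ℂ (mellin (expansionRemainder α f a N)) s :=
  let ⟨_, hc, hdecay⟩ := h.exists_remainder_isBigO_exp N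
  mellin_differentiableAt_of_isBigO_rpow_exp hc (locallyIntegrableOn_expansionRemainder
    h.locallyIntegrableOn N) hdecay (by simpa using h.remainder_isBigO N) hs

theorem mellin_remainder_succ (hs : α - N < s.re) :
    mellin (expansionRemainder α f a (N + 1)) s
      = mellin (expansionRemainder α f a N) s - a N / (s - (α - N)) := by
  have hterm := hasMellin_cpow_Ioc ((N : ℂ) - α) (s := s) (by simp; linarith)
  rw [expansionRemainder_succ]
  refine (hasMellin_sub (h.mellinConvergent_remainder hs) (hterm.1.const_smul (a N))).2.trans ?_
  rw [mellin_const_smul, hterm.2, smul_eq_mul]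
  ring

theorem regularPart_add_principalPart_succ (hs : α - N < s.re) :
    regularPart α f a (N + 1) s + principalPart α a (N + 1) s
      = regularPart α f a N s + principalPart α a N s := by
  have hpole : s ≠ α - N := fun hs' => by simp [hs'] at hs
  have hsplit := div_sub_eq_dslope_add_div (fun z => (Gamma z)⁻¹) hpole
  simp only [regularPart, principalPart, Finset.sum_range_succ, h.mellin_remainder_succ hs]
  linear_combination -a N * hsplit

theorem regularPart_add_principalPart_of_le {M : ℕ} (hMN : M ≤ N) (hs : α - M < s.re) :
    regularPart α f a N s + principalPart α a N s
      = regularPart α f a M s + principalPart α a M s := by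
  induction N, hMN using Nat.le_induction with
  | base => rfl
  | succ n hMn ih =>
    have hn : α - n < s.re := by
      have : (M : ℝ) ≤ n := by exact_mod_cast hMn
      linarith
    rw [h.regularPart_add_principalPart_succ hn, ih]

theorem mellinContinuation_eq (hs : α - N < s.re) :
    mellinContinuation α f a s = regularPart α f a N s + principalPart α a N s := by
  have hceil : α - (⌈α - s.re⌉₊ + 1 : ℕ) < s.re := by
    push_cast
    linarith [Nat.le_ceil (α - s.re)]
  rw [mellinContinuation, ← h.regularPart_add_principalPart_of_le (le_max_right N _) hceil,
    h.regularPart_add_principalPart_of_le (le_max_left _ _) hs]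

theorem mellinContinuation_eventuallyEq {s₀ : ℂ} (hs₀ : α - N < s₀.re) :
    mellinContinuation α f a =ᶠ[𝓝 s₀] fun s => regularPart α f a N s + principalPart α a N s :=
  eventually_of_mem ((isOpen_lt continuous_const Complex.continuous_re).mem_nhds hs₀)
    fun _ hs => h.mellinContinuation_eq hs

theorem analyticAt_regularPart {s₀ : ℂ} (hs₀ : α - N < s₀.re) :
    AnalyticAt ℂ (regularPart α f a N) s₀ := by
  have hopen : IsOpen {s : ℂ | α - N < s.re} := isOpen_lt continuous_const Complex.continuous_re
  refine DifferentiableOn.analyticAt (fun s hs => DifferentiableAt.differentiableWithinAt ?_)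
    (hopen.mem_nhds hs₀)
  refine (Complex.differentiable_one_div_Gamma s).mul (h.differentiableAt_mellin_remainder hs)
    |>.add (DifferentiableAt.fun_sum fun k _ => (DifferentiableAt.const_mul ?_ _))
  exact (Complex.differentiableOn_dslope univ_mem).2
    Complex.differentiable_one_div_Gamma.differentiableOn |>.differentiableAt univ_mem

theorem mellinConvergent (hs : α < s.re) : MellinConvergent f s := by
  simpa using h.mellinConvergent_remainder (N := 0) (by simpa using hs)

theorem mellinContinuation_eq_mellin (hs : α < s.re) :
    mellinContinuation α f a s = (Gamma s)⁻¹ * mellin f s := by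
  simp [h.mellinContinuation_eq (N := 0) (by simpa using hs), regularPart, principalPart]

theorem analyticAt_mellinContinuation (hs : ∀ k : ℕ, s ≠ α - k) :
    AnalyticAt ℂ (mellinContinuation α f a) s := by
  obtain ⟨N, hN⟩ := exists_nat_gt (α - s.re)
  have hN' : α - N < s.re := by linarith
  exact ((h.analyticAt_regularPart hN').add (analyticAt_principalPart fun k _ => hs k)).congr
    (h.mellinContinuation_eventuallyEq hN').symm

theorem analyticAt_mellinContinuation_sub_pole (k : ℕ) :
    AnalyticAt ℂ (fun s => mellinContinuation α f a s - a k * (Gamma (α - k))⁻¹ / (s - (α - k)))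
      (α - k) := by
  have hk : α - (k + 1 : ℕ) < ((α : ℂ) - k).re := by simp
  have heq : (fun s => regularPart α f a (k + 1) s + principalPart α a k s) =ᶠ[𝓝 ((α : ℂ) - k)]
      fun s => mellinContinuation α f a s - a k * (Gamma (α - k))⁻¹ / (s - (α - k)) := by
    filter_upwards [h.mellinContinuation_eventuallyEq hk] with s hs
    rw [hs, principalPart, principalPart, Finset.sum_range_succ]
    ring
  refine ((h.analyticAt_regularPart hk).add (analyticAt_principalPart fun j hj => ?_)).congr heq
  rw [Ne, sub_right_inj, Nat.cast_inj]
  exact hj.ne'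

end HasMellinExpansion

end

theorem expansionRemainder_ofReal {α : ℝ} {f : ℝ → ℝ} {a : ℕ → ℝ} (N : ℕ) {t : ℝ}
    (ht : t ∈ Ioc 0 1) :
    expansionRemainder α (fun t => f t) (fun k => a k) N t
      = ((f t - t ^ (-α) * ∑ k ∈ Finset.range N, a k * t ^ k : ℝ) : ℂ) := by
  have hpow (k : ℕ) : (t : ℂ) ^ ((k : ℂ) - α) = ((t ^ (-α) * t ^ k : ℝ) : ℂ) := by
    rw [← Real.rpow_natCast, ← Real.rpow_add ht.1, Complex.ofReal_cpow ht.1.le]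
    push_cast
    congr 1
    ring
  simp only [expansionRemainder, indicator_of_mem ht, hpow, Finset.mul_sum]
  push_cast
  exact congrArg _ (Finset.sum_congr rfl fun k _ => by ring)

theorem HasMellinExpansion.ofReal {α : ℝ} {f : ℝ → ℝ} {a : ℕ → ℝ}
    (hf : ContinuousOn f (Ioi 0))
    (hdecay : ∃ c > (0 : ℝ), ∃ C : ℝ, ∀ t ≥ (1 : ℝ), |f t| ≤ C * Real.exp (-c * t))
    (hasymp : ∀ N : ℕ, ∃ C : ℝ, ∀ t ∈ Ioc (0 : ℝ) 1,
      |f t - t ^ (-α) * ∑ k ∈ Finset.range N, a k * t ^ k| ≤ C * t ^ ((N : ℝ) - α)) :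
    HasMellinExpansion α (fun t => f t) (fun k => a k) where
  locallyIntegrableOn :=
    (Complex.continuous_ofReal.comp_continuousOn hf).locallyIntegrableOn measurableSet_Ioi
  exists_isBigO_exp := by
    obtain ⟨c, hc, C, hC⟩ := hdecay
    refine ⟨c, hc, .of_bound C ?_⟩
    filter_upwards [eventually_ge_atTop 1] with t ht
    simpa [abs_of_pos (Real.exp_pos _)] using hC t ht
  remainder_isBigO N := by
    obtain ⟨C, hC⟩ := hasymp N
    refine .of_bound C ?_
    filter_upwards [Ioc_mem_nhdsGT zero_lt_one] with t ht
    rw [expansionRemainder_ofReal N ht, Complex.norm_real, Real.norm_eq_abs, Real.norm_eq_abs,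
      abs_of_pos (Real.rpow_pos_of_pos ht.1 _)]
    exact hC t ht

theorem mellin_transform_meromorphic_continuation_general
    (d : ℕ) (f : ℝ → ℝ) (hf : ContinuousOn f (Set.Ioi 0))
    (hdecay : ∃ c > (0 : ℝ), ∃ C : ℝ, ∀ t ≥ (1 : ℝ), |f t| ≤ C * Real.exp (-c * t))
    (a : ℕ → ℝ)
    (hasymp : ∀ N : ℕ, ∃ C : ℝ, ∀ t ∈ Set.Ioc (0 : ℝ) 1,
      |f t - t ^ (-(((d : ℝ) - 1) / 2)) * ∑ k ∈ Finset.range N, a k * t ^ k|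
        ≤ C * t ^ ((N : ℝ) - ((d : ℝ) - 1) / 2)) :
    ∃ Z : ℂ → ℂ,
      (∀ s : ℂ, ((d : ℝ) - 1) / 2 < s.re →
        IntegrableOn (fun t : ℝ => (t : ℂ) ^ (s - 1) * (f t : ℂ)) (Set.Ioi 0) ∧
        Z s = (Complex.Gamma s)⁻¹
          * ∫ t in Set.Ioi (0 : ℝ), (t : ℂ) ^ (s - 1) * (f t : ℂ)) ∧
      (∀ s₀ : ℂ, (∀ k : ℕ, s₀ ≠ ((d : ℂ) - 1) / 2 - k) → AnalyticAt ℂ Z s₀) ∧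
      (∀ k : ℕ, AnalyticAt ℂ
        (fun s => Z s - (a k : ℂ) * (Complex.Gamma (((d : ℂ) - 1) / 2 - k))⁻¹
            / (s - (((d : ℂ) - 1) / 2 - k)))
        (((d : ℂ) - 1) / 2 - k)) := by
  set α : ℝ := ((d : ℝ) - 1) / 2
  have h : HasMellinExpansion α (fun t => (f t : ℂ)) (fun k => (a k : ℂ)) :=
    .ofReal hf hdecay hasymp
  have hα : ((d : ℂ) - 1) / 2 = α := by simp [α]
  simp only [hα]
  refine ⟨mellinContinuation α _ _, fun s hs => ⟨?_, h.mellinContinuation_eq_mellin hs⟩,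
    fun s hs => h.analyticAt_mellinContinuation hs, h.analyticAt_mellinContinuation_sub_pole⟩
  simpa [MellinConvergent] using h.mellinConvergent hs

/-- Meromorphic continuation of the Mellin transform: let `f : (0,∞) → ℝ` be
continuous, exponentially decaying at `∞`, with an asymptotic expansion
`f(t) ~ t^{-(d-1)/2} Σ_k a_k t^k` as `t → 0⁺`. Then
`ζ(s) = Γ(s)⁻¹ ∫₀^∞ t^{s-1} f(t) dt`, absolutely convergent for `Re s > (d-1)/2`,
extends to a meromorphic function `Z` on ℂ, analytic away from the points
`(d-1)/2 - k` (`k ∈ ℕ`), with at most a simple pole at `(d-1)/2 - k` of residue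
`a_k / Γ((d-1)/2 - k)` (interpreted as `0`, i.e. no pole, when `(d-1)/2 - k` is a
non-positive integer, since `Γ⁻¹` vanishes there). -/
theorem mellin_transform_meromorphic_continuation
    (d : ℕ) (hd : 2 ≤ d) (f : ℝ → ℝ) (hf : ContinuousOn f (Set.Ioi 0))
    (hdecay : ∃ c > (0 : ℝ), ∃ C : ℝ, ∀ t ≥ (1 : ℝ), |f t| ≤ C * Real.exp (-c * t))
    (a : ℕ → ℝ)
    (hasymp : ∀ N : ℕ, ∃ C : ℝ, ∀ t ∈ Set.Ioc (0 : ℝ) 1,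
      |f t - t ^ (-(((d : ℝ) - 1) / 2)) * ∑ k ∈ Finset.range N, a k * t ^ k|
        ≤ C * t ^ ((N : ℝ) - ((d : ℝ) - 1) / 2)) :
    ∃ Z : ℂ → ℂ,
      (∀ s : ℂ, ((d : ℝ) - 1) / 2 < s.re →
        IntegrableOn (fun t : ℝ => (t : ℂ) ^ (s - 1) * (f t : ℂ)) (Set.Ioi 0) ∧
        Z s = (Complex.Gamma s)⁻¹
          * ∫ t in Set.Ioi (0 : ℝ), (t : ℂ) ^ (s - 1) * (f t : ℂ)) ∧
      (∀ s₀ : ℂ, (∀ k : ℕ, s₀ ≠ ((d : ℂ) - 1) / 2 - k) → AnalyticAt ℂ Z s₀) ∧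
      (∀ k : ℕ, AnalyticAt ℂ
        (fun s => Z s - (a k : ℂ) * (Complex.Gamma (((d : ℂ) - 1) / 2 - k))⁻¹
            / (s - (((d : ℂ) - 1) / 2 - k)))
        (((d : ℂ) - 1) / 2 - k)) :=
  mellin_transform_meromorphic_continuation_general d f hf hdecay a hasymp
end
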